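/- arXiv:0902.3965 — 3 statements merged into one kernel-verified Lean document; each statement's English description precedes it below -/
import Mathlib

section
/- The affine curve defined by Lind and Reichardt's equation has no rational points: for all rational numbers x and y, one has 2·y² ≠ 1 − 17·x⁴. -/
/-!
Writing `x = a / c` in lowest terms, `b = y c²` satisfies `2 b² = c⁴ - 17 a⁴`, and `b` is an
integer because `2` is squarefree. Modulo any prime `p ∣ b` this gives `c⁴ ≡ 17 a⁴` with `p ∤ a`,
so `17` is a square mod `p`, and by quadratic reciprocity `p` is a square mod `17` (as is `2`).
Hence `|b|` is a square `s²` mod `17`, nonzero since `17 ∤ b`, and `2 s⁴ ≡ c⁴ (mod 17)`;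
but `2` is not a fourth power mod `17`.
-/

theorem Rat.den_eq_one_of_mul_sq_eq_intCast {q : ℚ} {m n : ℤ} (hm : Squarefree m)
    (h : m * q ^ 2 = n) : q.den = 1 := by
  have hm0 : (m : ℚ) ≠ 0 := by exact_mod_cast hm.ne_zero
  have hq : q * q = Rat.divInt n m := by
    rw [Rat.divInt_eq_div, ← h]; field_simp
  have hden : ((q.den : ℤ) * q.den) ∣ m := by
    exact_mod_cast Rat.mul_self_den q ▸ hq ▸ Rat.den_dvd n m
  simpa using Int.isUnit_iff_natAbs_eq.mp (hm _ hden)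

theorem isSquare_natCast_of_forall_prime_dvd {R : Type*} [CommSemiring R] {n : ℕ}
    (h : ∀ p : ℕ, p.Prime → p ∣ n → IsSquare (p : R)) : IsSquare (n : R) := by
  induction n using induction_on_primes with
  | zero => exact ⟨0, by simp⟩
  | one => exact ⟨1, by simp⟩
  | prime_mul p a hp ih =>
    push_cast
    exact (h p hp (dvd_mul_right p a)).mul (ih fun q hq hqa => h q hq (hqa.mul_left p))

theorem isSquare_of_sq_eq_mul_sq {F : Type*} [Field F] {a c d : F} (ha : a ≠ 0)
    (h : c ^ 2 = d * a ^ 2) : IsSquare d :=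
  ⟨c / a, by field_simp; rw [h]⟩

theorem two_mul_pow_four_ne_pow_four_zmod_seventeen :
    ∀ s t : ZMod 17, s ≠ 0 → 2 * s ^ 4 ≠ t ^ 4 := by decide

section LindReichardt

variable {a b c : ℤ}

theorem not_seventeen_dvd_of_two_mul_sq_eq (hac : IsCoprime a c)
    (h : 2 * b ^ 2 = c ^ 4 - 17 * a ^ 4) : ¬ (17 : ℤ) ∣ b := by
  have h17 : Prime (17 : ℤ) := by norm_num
  rintro ⟨k, rfl⟩
  obtain ⟨m, rfl⟩ : (17 : ℤ) ∣ c :=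
    h17.dvd_of_dvd_pow (n := 4) ⟨2 * 17 * k ^ 2 + a ^ 4, by linear_combination -h⟩
  have h17a : (17 : ℤ) ∣ a :=
    h17.dvd_of_dvd_pow (n := 4) ⟨17 ^ 2 * m ^ 4 - 2 * k ^ 2,
      mul_left_cancel₀ (by norm_num : (17 : ℤ) ≠ 0) (by linear_combination h)⟩
  exact h17.not_isUnit (hac.isUnit_of_dvd' h17a (dvd_mul_right 17 m))

theorem isSquare_seventeen_zmod_of_dvd {p : ℕ} [Fact p.Prime] (hac : IsCoprime a c)
    (h : 2 * b ^ 2 = c ^ 4 - 17 * a ^ 4) (hpb : (p : ℤ) ∣ b) : IsSquare (17 : ZMod p) := by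
  have hb : (b : ZMod p) = 0 := (ZMod.intCast_zmod_eq_zero_iff_dvd b p).mpr hpb
  have hmod : ((c : ZMod p) ^ 2) ^ 2 = 17 * ((a : ZMod p) ^ 2) ^ 2 := by
    have := congrArg (Int.cast : ℤ → ZMod p) h
    push_cast at this
    rw [hb] at this
    linear_combination -this
  refine isSquare_of_sq_eq_mul_sq (pow_ne_zero 2 fun ha => ?_) hmod
  have hc : (c : ZMod p) = 0 := by simpa [ha] using hmod
  simpa [ha, hc] using hac.map (Int.castRingHom (ZMod p))

theorem isSquare_zmod_seventeen_of_prime_dvd {p : ℕ} (hp : p.Prime) (hac : IsCoprime a c)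
    (h : 2 * b ^ 2 = c ^ 4 - 17 * a ^ 4) (hpb : (p : ℤ) ∣ b) : IsSquare (p : ZMod 17) := by
  have : Fact p.Prime := ⟨hp⟩
  have : Fact (Nat.Prime 17) := ⟨by norm_num⟩
  obtain rfl | hp2 := eq_or_ne p 2
  · exact ⟨6, rfl⟩
  · exact (ZMod.exists_sq_eq_prime_iff_of_mod_four_eq_one rfl hp2).mpr
      (by exact_mod_cast isSquare_seventeen_zmod_of_dvd hac h hpb)

theorem two_mul_sq_ne_pow_four_sub_seventeen_mul_pow_four (hac : IsCoprime a c) :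
    2 * b ^ 2 ≠ c ^ 4 - 17 * a ^ 4 := by
  intro h
  obtain ⟨s, hs⟩ : IsSquare (b.natAbs : ZMod 17) :=
    isSquare_natCast_of_forall_prime_dvd fun p hp hpb =>
      isSquare_zmod_seventeen_of_prime_dvd hp hac h (Int.natCast_dvd.mpr hpb)
  have hs0 : s ≠ 0 := by
    rintro rfl
    rw [mul_zero, ZMod.natCast_eq_zero_iff] at hs
    exact not_seventeen_dvd_of_two_mul_sq_eq hac h (Int.natCast_dvd.mpr hs)
  apply two_mul_pow_four_ne_pow_four_zmod_seventeen s c hs0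
  have := congrArg (Int.cast : ℤ → ZMod 17) h
  rw [← Int.natAbs_sq b] at this
  simp only [Int.cast_sub, Int.cast_mul, Int.cast_pow, Int.cast_ofNat, Int.cast_natCast, hs] at this
  linear_combination this - (a : ZMod 17) ^ 4 * (by decide : (17 : ZMod 17) = 0)

end LindReichardt

/-- The Lind–Reichardt curve `2y² = 1 - 17x⁴` has no rational points. -/
theorem lind_reichardt_no_rational_points :
    ∀ x y : ℚ, 2 * y ^ 2 ≠ 1 - 17 * x ^ 4 := by
  intro x y h
  set q := y * (x.den : ℚ) ^ 2
  have hq : (2 : ℤ) * q ^ 2 = (((x.den : ℤ) ^ 4 - 17 * x.num ^ 4 : ℤ) : ℚ) := by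
    have hx : x = x.num / x.den := (Rat.num_div_den x).symm
    have hden : (x.den : ℚ) ≠ 0 := by positivity
    rw [hx] at h
    field_simp at h
    push_cast
    linear_combination h
  have hqint : (q.num : ℚ) = q :=
    Rat.coe_int_num_of_den_eq_one (Rat.den_eq_one_of_mul_sq_eq_intCast Int.prime_two.squarefree hq)
  rw [← hqint] at hq
  have hcop : IsCoprime x.num x.den := Int.isCoprime_iff_gcd_eq_one.mpr x.reduced
  exact two_mul_sq_ne_pow_four_sub_seventeen_mul_pow_four hcop (by exact_mod_cast hq)
end

section
/- Let k be a number field, let S be a finite set of nonzero prime ideals of the ring of integers O_k, and let 𝔮 be a nonzero prime ideal of O_k with 𝔮 ∉ S. Then there exists c ∈ k× such that: (i) σ(c) > 0 for every real embedding σ : k → ℝ; (ii) c is a square in the 𝔭-adic completion k_𝔭 for every 𝔭 ∈ S; and (iii) the 𝔮-adic valuation v_𝔮(c) is odd (so in particular c is not a square in k). -/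
/-!
Choose `c ∈ 𝓞 k` by the Chinese remainder theorem with `c ≡ π mod 𝔮²` for a uniformizer `π`
(so `v_𝔮(c) = 1`) and `c ≡ 1 mod 𝔭ᵉ` for `𝔭 ∈ S`, where `𝔭ᵉ` does not divide `4`. Then
`(c - 1) / 4` is `𝔭`-adically small, so `t² + t = (1 - c) / 4` has a root in `k_𝔭` by the
contraction principle, and `c = (1 + 2t)²`. Adding a large multiple of a positive integer lying
in the modulus makes `c` totally positive without disturbing the congruences.
-/

open IsDedekindDomain NumberField

open Metric Set WithZero

section Hensel

variable {K : Type*} [NormedField K] [IsUltrametricDist K]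

theorem norm_sq_sub_sq_le {r : ℝ} {s t : K} (hs : ‖s‖ ≤ r) (ht : ‖t‖ ≤ r) :
    ‖s ^ 2 - t ^ 2‖ ≤ r * ‖s - t‖ := by
  rw [sq_sub_sq, norm_mul]
  exact mul_le_mul_of_nonneg_right
    ((IsUltrametricDist.norm_add_le_max s t).trans (max_le hs ht)) (norm_nonneg _)

/-- `t ↦ -(d + t ^ 2)` is a contraction with constant `‖d‖` of the closed ball of radius `‖d‖`. -/
theorem exists_sq_add_self_eq_neg [CompleteSpace K] {d : K} (hd : ‖d‖ < 1) :
    ∃ t : K, t ^ 2 + t = -d := by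
  set f : K → K := fun t => -(d + t ^ 2)
  have hsq : ∀ {t : K}, ‖t‖ ≤ ‖d‖ → ‖t ^ 2‖ ≤ ‖d‖ := fun {t} ht => by
    rw [norm_pow]; nlinarith [norm_nonneg t]
  have hmaps : MapsTo f (closedBall 0 ‖d‖) (closedBall 0 ‖d‖) := fun t ht => by
    rw [mem_closedBall_zero_iff] at ht ⊢
    rw [norm_neg]
    exact (IsUltrametricDist.norm_add_le_max _ _).trans (max_le le_rfl (hsq ht))
  have hcontr : ContractingWith ‖d‖₊ (hmaps.restrict f _ _) := by
    refine ⟨hd, LipschitzWith.of_dist_le_mul fun s t => ?_⟩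
    have hs := mem_closedBall_zero_iff.mp s.2
    have ht := mem_closedBall_zero_iff.mp t.2
    simp only [Subtype.dist_eq, MapsTo.val_restrict_apply, dist_eq_norm, coe_nnnorm, f]
    rw [show -(d + (s : K) ^ 2) - -(d + t ^ 2) = -((s : K) ^ 2 - t ^ 2) by ring, norm_neg]
    exact norm_sq_sub_sq_le hs ht
  obtain ⟨t, -, ht, -⟩ := hcontr.exists_fixedPoint' isClosed_closedBall.isComplete hmaps
    (mem_closedBall_self (norm_nonneg d)) (edist_ne_top _ _)
  have hfix : -(d + t ^ 2) = t := ht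
  exact ⟨t, by linear_combination -hfix⟩

theorem isSquare_of_norm_sub_one_lt [CompleteSpace K] {c : K} (h : ‖c - 1‖ < ‖(4 : K)‖) :
    IsSquare c := by
  have h4 : (4 : K) ≠ 0 := norm_pos_iff.mp ((norm_nonneg _).trans_lt h)
  obtain ⟨t, ht⟩ := exists_sq_add_self_eq_neg (d := (1 - c) / 4) (by
    rwa [norm_div, div_lt_one (norm_pos_iff.mpr h4), ← norm_neg, neg_sub])
  refine ⟨1 + 2 * t, ?_⟩
  field_simp at ht
  linear_combination -ht

end Hensel

namespace IsDedekindDomain.HeightOneSpectrum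

variable {R : Type*} [CommRing R] [IsDedekindDomain R]

theorem intValuation_eq_exp_neg_one_of_sub_mem_sq (v : HeightOneSpectrum R) {π x : R}
    (hπ : v.intValuation π = exp (-1)) (hx : x - π ∈ v.asIdeal ^ 2) :
    v.intValuation x = exp (-1) := by
  have hlt : v.intValuation (x - π) < v.intValuation π := by
    rw [hπ]
    exact ((v.intValuation_le_pow_iff_mem _ 2).mpr hx).trans_lt (exp_lt_exp.mpr (by norm_num))
  simpa [hπ] using Valuation.map_add_eq_of_lt_left _ hlt

theorem exists_notMem_pow (v : HeightOneSpectrum R) {r : R} (hr : r ≠ 0) :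
    ∃ n : ℕ, r ∉ v.asIdeal ^ n := by
  by_contra! h
  have := Ideal.iInf_pow_eq_bot_of_isDomain v.asIdeal v.isPrime.ne_top
  exact hr (by simpa [this] using Ideal.mem_iInf.mpr h)

end IsDedekindDomain.HeightOneSpectrum

theorem Valuation.not_isSquare_of_eq_exp {R : Type*} [Ring R] (w : Valuation R ℤᵐ⁰) {x : R}
    {n : ℤ} (hn : Odd n) (hx : w x = exp n) : ¬ IsSquare x := by
  rintro ⟨r, rfl⟩
  have hr : w r ≠ 0 := fun h => exp_ne_zero (by rw [← hx, map_mul, h, mul_zero])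
  rw [map_mul, ← exp_log hr, ← exp_add, exp_inj] at hx
  exact Int.not_odd_iff_even.mpr ⟨_, hx.symm⟩ hn

namespace NumberField

variable {k : Type*} [Field k] [NumberField k]

theorem isSquare_algebraMap_adicCompletion_of_sub_one_mem (v : HeightOneSpectrum (𝓞 k))
    {n : ℕ} {x : 𝓞 k} (hx : x - 1 ∈ v.asIdeal ^ n) (h4 : (4 : 𝓞 k) ∉ v.asIdeal ^ n) :
    IsSquare (algebraMap k (v.adicCompletion k) x) := by
  have hv (y : k) : Valued.v (algebraMap k (v.adicCompletion k) y) = v.valuation k y :=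
    v.valuedAdicCompletion_eq_valuation' y
  apply isSquare_of_norm_sub_one_lt
  rw [Valued.toNormedField.norm_lt_iff, ← map_one (algebraMap k _), ← map_sub,
    ← map_ofNat (algebraMap k _) 4, hv, hv, ← map_one (algebraMap (𝓞 k) k), ← map_sub,
    ← map_ofNat (algebraMap (𝓞 k) k) 4, v.valuation_of_algebraMap, v.valuation_of_algebraMap]
  rw [← v.intValuation_le_pow_iff_mem, not_le] at h4
  exact ((v.intValuation_le_pow_iff_mem _ n).mpr hx).trans_lt h4

theorem exists_forall_sub_mem_pow_and_forall_pos (s : Finset (HeightOneSpectrum (𝓞 k)))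
    (e : HeightOneSpectrum (𝓞 k) → ℕ) (x : HeightOneSpectrum (𝓞 k) → 𝓞 k) :
    ∃ y : 𝓞 k, (∀ v ∈ s, y - x v ∈ v.asIdeal ^ e v) ∧
      ∀ σ : k →+* ℝ, 0 < σ (algebraMap (𝓞 k) k y) := by
  obtain ⟨y, hy⟩ := IsDedekindDomain.exists_forall_sub_mem_ideal (s := s) (fun v => v.asIdeal) e
    (fun v _ => v.prime) (fun v _ w _ hvw h => hvw (HeightOneSpectrum.ext h)) (fun v => x v)
  set I := ∏ v ∈ s, v.asIdeal ^ e v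
  have hN : 1 ≤ Ideal.absNorm I := by
    refine Nat.one_le_iff_ne_zero.mpr (mt Ideal.absNorm_eq_zero_iff.mp ?_)
    simp only [I, ← Ideal.zero_eq_bot, Finset.prod_ne_zero_iff]
    exact fun v _ => pow_ne_zero _ (by simpa only [Ideal.zero_eq_bot] using v.ne_bot)
  obtain ⟨m, hm⟩ : ∃ m : ℕ, ∀ σ : k →+* ℝ, -σ (algebraMap (𝓞 k) k y) < m := by
    obtain ⟨B, hB⟩ := (finite_range fun σ : k →+* ℝ => -σ (algebraMap (𝓞 k) k y)).bddAbove
    obtain ⟨m, hm⟩ := exists_nat_gt B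
    exact ⟨m, fun σ => (hB ⟨σ, rfl⟩).trans_lt hm⟩
  -- adding a multiple of the integer `absNorm I ∈ I` keeps the congruences and fixes the signs
  refine ⟨y + (m * Ideal.absNorm I : ℕ), fun v hv => ?_, fun σ => ?_⟩
  · have hmN : ((m * Ideal.absNorm I : ℕ) : 𝓞 k) ∈ v.asIdeal ^ e v := by
      refine Ideal.le_of_dvd (Finset.dvd_prod_of_mem (fun v => v.asIdeal ^ e v) hv) ?_
      rw [Nat.cast_mul]
      exact Ideal.mul_mem_left _ _ (Ideal.absNorm_mem I)
    simpa only [add_sub_right_comm] using add_mem (hy v hv) hmN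
  · have hmN : (m : ℝ) ≤ m * Ideal.absNorm I :=
      le_mul_of_one_le_right m.cast_nonneg (by exact_mod_cast hN)
    rw [map_add, map_add, map_natCast, map_natCast, Nat.cast_mul]
    linarith [hm σ]

end NumberField

/-- Weak approximation step: given a finite set `S` of nonzero primes of `𝓞 k`
and a prime `𝔮 ∉ S`, there is `c ∈ k×` that is positive under every real
embedding, a square in `k_𝔭` for every `𝔭 ∈ S`, and has odd `𝔮`-adic valuation
(hence is not a square in `k`). -/
theorem exists_weak_approximation_element (k : Type*) [Field k] [NumberField k]
    (S : Finset (HeightOneSpectrum (𝓞 k))) (q : HeightOneSpectrum (𝓞 k))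
    (hq : q ∉ S) :
    ∃ c : k, c ≠ 0 ∧
      (∀ σ : k →+* ℝ, 0 < σ c) ∧
      (∀ v ∈ S, IsSquare (algebraMap k (v.adicCompletion k) c)) ∧
      (∃ n : ℤ, Odd n ∧
        q.valuation k c = (Multiplicative.ofAdd n : Multiplicative ℤ)) ∧
      ¬ IsSquare c := by
  classical
  obtain ⟨π, hπ⟩ := q.intValuation_exists_uniformizer
  choose n hn using fun v : HeightOneSpectrum (𝓞 k) =>
    v.exists_notMem_pow (by norm_num : (4 : 𝓞 k) ≠ 0)
  obtain ⟨c, hc, hpos⟩ := exists_forall_sub_mem_pow_and_forall_pos (insert q S)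
    (fun v => if v = q then 2 else n v) (fun v => if v = q then π else 1)
  have hcq : q.valuation k c = exp (-1) := by
    rw [q.valuation_of_algebraMap]
    exact q.intValuation_eq_exp_neg_one_of_sub_mem_sq hπ
      (by simpa using hc q (Finset.mem_insert_self q S))
  refine ⟨c, fun h => exp_ne_zero (by rw [← hcq, h, map_zero]), hpos, fun v hv => ?_,
    ⟨-1, odd_neg_one, hcq⟩, (q.valuation k).not_isSquare_of_eq_exp odd_neg_one hcq⟩
  have hvq : v ≠ q := ne_of_mem_of_not_mem hv hq
  exact isSquare_algebraMap_adicCompletion_of_sub_one_mem v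
    (by simpa [hvq] using hc v (Finset.mem_insert_of_mem hv)) (hn v)
end

section
/- Weak approximation (Artin–Whaples): let K be a field and let |·|₁, …, |·|ₙ be nontrivial absolute values on K that are pairwise inequivalent. Then for any elements a₁, …, aₙ ∈ K and any ε > 0 there exists x ∈ K such that |x − aᵢ|ᵢ < ε for all i = 1, …, n. -/
namespace AbsoluteValue

variable {F : Type*} [Field F]

theorem isEquiv_iff_exists_forall_eq_rpow {v w : AbsoluteValue F ℝ} :
    v.IsEquiv w ↔ ∃ t : ℝ, 0 < t ∧ ∀ x, w x = v x ^ t := by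
  simp_rw [isEquiv_iff_exists_rpow_eq, funext_iff, eq_comm]

theorem exists_forall_apply_sub_lt_of_not_isEquiv {ι : Type*} [Finite ι]
    {v : ι → AbsoluteValue F ℝ} (h : ∀ i, (v i).IsNontrivial)
    (hv : Pairwise fun i j ↦ ¬(v i).IsEquiv (v j)) (a : ι → F) {ε : ℝ} (hε : 0 < ε) :
    ∃ x : F, ∀ i, v i (x - a i) < ε := by
  have := Fintype.ofFinite ι
  obtain ⟨x, hx⟩ := Metric.denseRange_iff.mp (denseRange_algebraMap_pi h hv)
    (fun i ↦ WithAbs.toAbs (v i) (a i)) ε hε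
  refine ⟨x, fun i ↦ ?_⟩
  have hi := (dist_le_pi_dist _ _ i).trans_lt hx
  rwa [dist_comm, dist_eq_norm] at hi

end AbsoluteValue

/-- Weak approximation (Artin–Whaples): if `|·|₁, …, |·|ₙ` are nontrivial,
pairwise inequivalent absolute values on a field `K`, then for any
`a₁, …, aₙ ∈ K` and `ε > 0` there is `x ∈ K` with `|x - aᵢ|ᵢ < ε` for all `i`. -/
theorem weak_approximation_artin_whaples (K : Type*) [Field K] (n : ℕ)
    (f : Fin n → AbsoluteValue K ℝ)
    (hnontriv : ∀ i, ∃ x : K, x ≠ 0 ∧ f i x ≠ 1)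
    (hineq : ∀ i j, i ≠ j →
      ¬ ∃ t : ℝ, 0 < t ∧ ∀ x : K, f j x = (f i x) ^ t)
    (a : Fin n → K) (ε : ℝ) (hε : 0 < ε) :
    ∃ x : K, ∀ i, f i (x - a i) < ε :=
  AbsoluteValue.exists_forall_apply_sub_lt_of_not_isEquiv hnontriv
    (fun i j hij ↦ mt AbsoluteValue.isEquiv_iff_exists_forall_eq_rpow.mp (hineq i j hij)) a hε
end
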